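/- In a green Veldkamp quadrangle, no 6-circuit contains a straight 2-path (x,a,y) whose middle vertex a is a point. -/

import Mathlib

/-- A Veldkamp graph: a graph endowed, at each vertex `v`, with a symmetric
anti-reflexive "local opposition" relation `opp v` on the neighborhood of `v`
that is 2-plump. -/
structure VeldkampGraph (V : Type*) where
  adj : V → V → Prop
  adj_symm : ∀ u v, adj u v → adj v u
  adj_irrefl : ∀ v, ¬ adj v v
  opp : V → V → V → Prop
  opp_adj_left : ∀ v x y, opp v x y → adj v x
  opp_adj_right : ∀ v x y, opp v x y → adj v y
  opp_symm : ∀ v x y, opp v x y → opp v y x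
  opp_irrefl : ∀ v x, ¬ opp v x x
  plump2 : ∀ v x y, adj v x → adj v y → ∃ z, adj v z ∧ opp v z x ∧ opp v z y

namespace VeldkampGraph

variable {V : Type*} (Γ : VeldkampGraph V)

/-- `p 0, p 1, ..., p s` is an `s`-path. -/
def IsPath (s : ℕ) (p : ℕ → V) : Prop :=
  (∀ i, i < s → Γ.adj (p i) (p (i + 1))) ∧ ∀ i, i + 2 ≤ s → p i ≠ p (i + 2)

/-- `p 0, ..., p s` is a straight `s`-path. -/
def IsStraight (s : ℕ) (p : ℕ → V) : Prop :=
  Γ.IsPath s p ∧ ∀ i, i + 2 ≤ s → Γ.opp (p (i + 1)) (p i) (p (i + 2))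

/-- There is an `s`-path from `x` to `y`. -/
def HasPathLen (s : ℕ) (x y : V) : Prop :=
  ∃ p : ℕ → V, Γ.IsPath s p ∧ p 0 = x ∧ p s = y

/-- `dist (x, y) = k`. -/
def DistEq (x y : V) (k : ℕ) : Prop :=
  Γ.HasPathLen k x y ∧ ∀ j < k, ¬ Γ.HasPathLen j x y

def Connected : Prop := ∀ x y : V, ∃ s, Γ.HasPathLen s x y

def Bipartite : Prop := ∃ P : Set V, ∀ u v, Γ.adj u v → (u ∈ P ↔ v ∉ P)

/-- A straight `m`-circuit, encoded as an `m`-periodic straight closed walk. -/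
def IsClosedStraight (m : ℕ) (q : ℕ → V) : Prop :=
  (∀ i, Γ.adj (q i) (q (i + 1))) ∧ (∀ i, Γ.opp (q (i + 1)) (q i) (q (i + 2))) ∧
    ∀ i, q (i + m) = q i

/-- An `m`-circuit: an `m`-periodic closed walk through `m` distinct vertices. -/
def IsCircuit (m : ℕ) (q : ℕ → V) : Prop :=
  (∀ i, Γ.adj (q i) (q (i + 1))) ∧ (∀ i, q (i + m) = q i) ∧
    ∀ i j, i < m → j < m → q i = q j → i = j

end VeldkampGraph

/-- A Veldkamp `n`-gon. -/
structure VeldkampNGon (V : Type*) (n : ℕ) extends VeldkampGraph V where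
  two_le : 2 ≤ n
  connected : toVeldkampGraph.Connected
  bipartite : toVeldkampGraph.Bipartite
  vp2 : ∀ k, 1 ≤ k → k ≤ n - 1 → ∀ p j q, toVeldkampGraph.IsStraight k p →
    j ≤ k → toVeldkampGraph.IsStraight j q → q 0 = p 0 → q j = p k →
    j = k ∧ ∀ i ≤ k, q i = p i
  vp3 : ∀ p, toVeldkampGraph.IsStraight (n + 1) p →
    ∃ q, toVeldkampGraph.IsClosedStraight (2 * n) q ∧ ∀ i ≤ n + 1, q i = p i

namespace VeldkampNGon

variable {V : Type*} {n : ℕ} (Γ : VeldkampNGon V n)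

/-- Two vertices are opposite if there is a root (straight `n`-path) from one
to the other. -/
def Opp (x y : V) : Prop :=
  ∃ p, Γ.IsStraight n p ∧ p 0 = x ∧ p n = y

/-- The set of vertices opposite `x`. -/
def opSet (x : V) : Set V := {y | Γ.Opp x y}

/-- Two edges are opposite if some straight `(n+1)`-path has them as its first
and last edges. -/
def EdgeOpp (e f : Sym2 V) : Prop :=
  ∃ p, Γ.IsStraight (n + 1) p ∧ s(p 0, p 1) = e ∧ s(p n, p (n + 1)) = f

end VeldkampNGon

/-- A green Veldkamp quadrangle: a Veldkamp 4-gon with a bipartition into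
points `Pt` and lines (the complement), whose local opposition relations at
lines are trivial. -/
structure GreenVQ (V : Type*) extends VeldkampNGon V 4 where
  Pt : Set V
  part : ∀ u v, adj u v → (u ∈ Pt ↔ v ∉ Pt)
  green : ∀ x, x ∉ Pt → ∀ a b, adj x a → adj x b → a ≠ b → opp x a b

namespace GreenVQ

variable {V : Type*} (Γ : GreenVQ V)

/-- A weed: a non-straight 4-path `(a,x,b,y,c)` with `a,b,c` points and
`dist (a, c) = 4`. -/
def IsWeed (p : ℕ → V) : Prop :=
  Γ.IsPath 4 p ∧ ¬ Γ.IsStraight 4 p ∧ p 0 ∈ Γ.Pt ∧ p 2 ∈ Γ.Pt ∧ p 4 ∈ Γ.Pt ∧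
    Γ.DistEq (p 0) (p 4) 4

/-- `a ≃ b` for points: `a = b` or some weed begins at `a` and ends at `b`. -/
def PtSim (a b : V) : Prop :=
  a = b ∨ ∃ p, Γ.IsWeed p ∧ p 0 = a ∧ p 4 = b

/-- `x ~ y` for lines: some weed contains both `x` and `y`. -/
def LnSim (x y : V) : Prop :=
  ∃ p, Γ.IsWeed p ∧ ((p 1 = x ∧ p 3 = y) ∨ (p 1 = y ∧ p 3 = x))

/-- Flat: no two vertices have the same set of opposite vertices. -/
def Flat : Prop := ∀ x y : V, Γ.opSet x = Γ.opSet y → x = y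

end GreenVQ

namespace VeldkampGraph

variable {V : Type*} (Γ : VeldkampGraph V)

theorem isStraight_of_opp {s : ℕ} {p : ℕ → V} (hs : 2 ≤ s)
    (hopp : ∀ i, i + 2 ≤ s → Γ.opp (p (i + 1)) (p i) (p (i + 2))) : Γ.IsStraight s p := by
  refine ⟨⟨fun i hi => ?_, fun i hi h => Γ.opp_irrefl _ _ (h ▸ hopp i hi)⟩, hopp⟩
  rcases Nat.lt_or_ge (i + 1) s with hi' | hi'
  · exact Γ.adj_symm _ _ (Γ.opp_adj_left _ _ _ (hopp i hi'))
  · obtain ⟨j, rfl⟩ : ∃ j, i = j + 1 := ⟨i - 1, by omega⟩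
    exact Γ.opp_adj_right _ _ _ (hopp j (by omega))

variable {Γ}

theorem IsClosedStraight.isStraight_shift {m : ℕ} {c : ℕ → V} (hc : Γ.IsClosedStraight m c)
    (k s : ℕ) : Γ.IsStraight s (fun j => c (k + j)) :=
  ⟨⟨fun j _ => hc.1 (k + j), fun j _ (h : c (k + j) = c (k + j + 2)) =>
    Γ.opp_irrefl _ _ (h ▸ hc.2.1 (k + j) : Γ.opp (c (k + j + 1)) (c (k + j + 2)) _)⟩,
    fun j _ => hc.2.1 (k + j)⟩

theorem IsCircuit.shift {m : ℕ} {q : ℕ → V} (hq : Γ.IsCircuit m q) (k : ℕ) :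
    Γ.IsCircuit m (fun j => q (k + j)) := by
  obtain ⟨hadj, hper, hinj⟩ := hq
  refine ⟨fun j => hadj (k + j), fun j => by simp only [← Nat.add_assoc, hper],
    fun a b ha hb hab => ?_⟩
  have hmod : (k + a) % m = (k + b) % m :=
    hinj _ _ (Nat.mod_lt _ (by omega)) (Nat.mod_lt _ (by omega))
      (by rwa [Function.Periodic.map_mod_nat hper, Function.Periodic.map_mod_nat hper])
  have := Nat.ModEq.add_left_cancel' k hmod
  rwa [Nat.ModEq, Nat.mod_eq_of_lt ha, Nat.mod_eq_of_lt hb] at this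

theorem IsCircuit.apply_ne_apply_add_two {m : ℕ} {q : ℕ → V} (hq : Γ.IsCircuit m q)
    (hm : 3 ≤ m) (j : ℕ) : q j ≠ q (j + 2) := fun h =>
  absurd ((hq.shift j).2.2 0 2 (by omega) (by omega) h) (by omega)

end VeldkampGraph

namespace VeldkampNGon

variable {V : Type*} {n : ℕ} (Γ : VeldkampNGon V n)

theorem ne_of_isStraight_closing {p r : ℕ → V} (hp : Γ.IsStraight (n + 1) p)
    (hr : Γ.IsStraight (n - 1) r) (hr₀ : r 0 = p (n + 1)) (hr₁ : r (n - 1) = p 0) :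
    r (n - 2) ≠ p 1 := by
  have hn := Γ.two_le
  obtain ⟨c, hc, hcp⟩ := Γ.vp3 p hp
  -- `vp2` forces `r` to be the rest of the straight `2n`-circuit `c` extending `p`.
  have hrc : ∀ i ≤ n - 1, r i = c (n + 1 + i) :=
    (Γ.vp2 (n - 1) (by omega) le_rfl _ _ _ (hc.isStraight_shift (n + 1) _)
      le_rfl hr (hr₀.trans (hcp _ le_rfl).symm)
      (by rw [hr₁, ← hcp 0 (Nat.zero_le _), ← hc.2.2 0]; congr 1; omega)).2
  intro h
  have hopp := hc.2.1 (2 * n - 1)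
  rw [show 2 * n - 1 = n + 1 + (n - 2) by omega, ← hrc _ (by omega), h,
    show n + 1 + (n - 2) + 2 = 1 + 2 * n by omega, hc.2.2, hcp 1 (by omega)] at hopp
  exact Γ.opp_irrefl _ _ hopp

end VeldkampNGon

namespace GreenVQ

variable {V : Type*} (Γ : GreenVQ V)

theorem mem_Pt_add_two_iff {q : ℕ → V} (hadj : ∀ j, Γ.adj (q j) (q (j + 1))) (j : ℕ) :
    q (j + 2) ∈ Γ.Pt ↔ q j ∈ Γ.Pt := by
  have h₀ := Γ.part _ _ (hadj j)
  have h₁ := Γ.part _ _ (hadj (j + 1))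
  tauto

theorem opp_of_isCircuit_of_not_mem_Pt {m : ℕ} {q : ℕ → V} (hq : Γ.IsCircuit m q)
    (hm : 3 ≤ m) {j : ℕ} (hj : q (j + 1) ∉ Γ.Pt) : Γ.opp (q (j + 1)) (q j) (q (j + 2)) :=
  Γ.green _ hj _ _ (Γ.adj_symm _ _ (hq.1 j)) (hq.1 (j + 1)) (hq.apply_ne_apply_add_two hm j)

/-- Since lines are green, choosing `z` opposite to both `q 2` and `q 4` at `q 3` makes
`z, q 3, q 2, q 1, q 0, q 5` a straight 5-path, closed up by the straight 3-path
`q 5, q 4, q 3, z`, which retraces its first edge. -/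
theorem not_opp_of_isCircuit_six {q : ℕ → V} (hq : Γ.IsCircuit 6 q) (h₁ : q 1 ∈ Γ.Pt) :
    ¬ Γ.opp (q 1) (q 0) (q 2) := by
  intro hop
  have hadj := hq.1
  have h₀ : q 0 ∉ Γ.Pt := fun h => (Γ.part _ _ (hadj 0)).1 h h₁
  have h₂ : q 2 ∉ Γ.Pt := (Γ.part _ _ (hadj 1)).1 h₁
  have h₄ : q 4 ∉ Γ.Pt := (Γ.part _ _ (hadj 3)).1 ((Γ.mem_Pt_add_two_iff hadj 1).2 h₁)
  have o₂ := Γ.opp_of_isCircuit_of_not_mem_Pt hq (by norm_num) (j := 1) h₂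
  have o₄ := Γ.opp_of_isCircuit_of_not_mem_Pt hq (by norm_num) (j := 3) h₄
  have o₀ : Γ.opp (q 0) (q 5) (q 1) := by
    have h := Γ.opp_of_isCircuit_of_not_mem_Pt hq (by norm_num) (j := 5)
      (by rwa [show q (5 + 1) = q 0 from hq.2.1 0])
    rwa [show q (5 + 1) = q 0 from hq.2.1 0, show q (5 + 2) = q 1 from hq.2.1 1] at h
  obtain ⟨z, -, hz₂, hz₄⟩ := Γ.plump2 (q 3) (q 2) (q 4) (Γ.adj_symm _ _ (hadj 2)) (hadj 3)
  have hp : Γ.IsStraight 5 (fun j => [z, q 3, q 2, q 1, q 0, q 5].getD j z) := by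
    refine Γ.isStraight_of_opp (by norm_num) fun j hj => ?_
    have : j < 4 := by omega
    interval_cases j
    exacts [hz₂, Γ.opp_symm _ _ _ o₂, Γ.opp_symm _ _ _ hop, Γ.opp_symm _ _ _ o₀]
  have hr : Γ.IsStraight 3 (fun j => [q 5, q 4, q 3, z].getD j z) := by
    refine Γ.isStraight_of_opp (by norm_num) fun j hj => ?_
    have : j < 2 := by omega
    interval_cases j
    exacts [Γ.opp_symm _ _ _ o₄, Γ.opp_symm _ _ _ hz₄]
  exact Γ.ne_of_isStraight_closing hp hr rfl rfl rfl

end GreenVQ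

/-- In a green Veldkamp quadrangle, no 6-circuit contains a straight 2-path
whose middle vertex is a point. -/
theorem stmt7 {V : Type*} (Γ : GreenVQ V) (q : ℕ → V) (hq : Γ.IsCircuit 6 q)
    (i : ℕ) (hmid : q (i + 1) ∈ Γ.Pt) :
    ¬ Γ.opp (q (i + 1)) (q i) (q (i + 2)) :=
  Γ.not_opp_of_isCircuit_six (hq.shift i) hmid
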